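/- arXiv:math/0506116 — 4 statements merged into one kernel-verified Lean document; each statement's English description precedes it below -/
import Mathlib

section
/- For all real a, c, the function H(x,y) = (1+x)^(−2c)·(1+y)^(−2a)·(x⁴+y²) is a first integral, on the region {(x,y) : x > −1, y > −1}, of the system ẋ = y + xy + (1−a)y² + (1−a)xy² − a x⁴ − a x⁵, ẏ = c y² − 2x³ + c y³ − 2x³ y + (c−2)x⁴(1+y). -/
theorem darboux_first_integral_quintic (a c : ℝ) :
    ∀ x y : ℝ, x > -1 → y > -1 →
      (y + x*y + (1-a)*y^2 + (1-a)*x*y^2 - a*x^4 - a*x^5) *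
        deriv (fun x : ℝ =>
          (1+x) ^ (-(2*c)) * (1+y) ^ (-(2*a)) * (x^4 + y^2)) x +
      (c*y^2 - 2*x^3 + c*y^3 - 2*x^3*y + (c-2)*x^4*(1+y)) *
        deriv (fun y : ℝ =>
          (1+x) ^ (-(2*c)) * (1+y) ^ (-(2*a)) * (x^4 + y^2)) y = 0 := by
  intro x y hx hy
  have hx0 : (1:ℝ) + x ≠ 0 := by linarith
  have hy0 : (1:ℝ) + y ≠ 0 := by linarith
  have hpx : HasDerivAt (fun x : ℝ => (1+x) ^ (-(2*c)))
      ((-(2*c)) * (1+x) ^ (-(2*c)-1) * 1) x := by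
    exact (Real.hasDerivAt_rpow_const (p := -(2*c)) (Or.inl hx0)).comp x
      ((hasDerivAt_id x).const_add 1)
  have hpy : HasDerivAt (fun y : ℝ => (1+y) ^ (-(2*a)))
      ((-(2*a)) * (1+y) ^ (-(2*a)-1) * 1) y := by
    exact (Real.hasDerivAt_rpow_const (p := -(2*a)) (Or.inl hy0)).comp y
      ((hasDerivAt_id y).const_add 1)
  have hqx : HasDerivAt (fun x : ℝ => x^4 + y^2) (4*x^3) x := by
    have := (hasDerivAt_pow 4 x).add_const (y^2)
    simpa using this
  have hqy : HasDerivAt (fun y : ℝ => x^4 + y^2) (2*y) y := by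
    have := ((hasDerivAt_pow 2 y).const_add (x^4))
    simpa using this
  have hX : HasDerivAt (fun x : ℝ => (1+x) ^ (-(2*c)) * (1+y) ^ (-(2*a)) * (x^4 + y^2))
      (((-(2*c)) * (1+x) ^ (-(2*c)-1) * 1) * (1+y) ^ (-(2*a)) * (x^4 + y^2)
        + (1+x) ^ (-(2*c)) * (1+y) ^ (-(2*a)) * (4*x^3)) x :=
    (hpx.mul_const ((1+y) ^ (-(2*a)))).mul hqx
  have hY : HasDerivAt (fun y : ℝ => (1+x) ^ (-(2*c)) * (1+y) ^ (-(2*a)) * (x^4 + y^2))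
      (((1+x) ^ (-(2*c)) * ((-(2*a)) * (1+y) ^ (-(2*a)-1) * 1)) * (x^4 + y^2)
        + (1+x) ^ (-(2*c)) * (1+y) ^ (-(2*a)) * (2*y)) y :=
    ((hpy.const_mul ((1+x) ^ (-(2*c)))).mul hqy)
  rw [hX.deriv, hY.deriv]
  have ex : (1+x) ^ (-(2*c)) = (1+x) ^ (-(2*c)-1) * (1+x) := by
    rw [← Real.rpow_add_one hx0]; ring_nf
  have ey : (1+y) ^ (-(2*a)) = (1+y) ^ (-(2*a)-1) * (1+y) := by
    rw [← Real.rpow_add_one hy0]; ring_nf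
  rw [ex, ey]
  ring
end

section
/- For all real a, c and ε, the function H(x,y) = (1+x)^(−2c)·(1+y)^(−2a)·(x⁴ + y² + ε x²) is a first integral, on {x > −1, y > −1}, of the system ẋ = −ε x(a x + a x²) + y + xy + (1−a)y² + (1−a)xy² − a x⁴ − a x⁵, ẏ = −ε x(1 + (1−c)x + y + (1−c)xy) + c y² − 2x³ + c y³ − 2x³ y + (c−2)x⁴(1+y). -/
/-!
Darboux's method: the lines `1 + x = 0`, `1 + y = 0` and the curve `F = x⁴ + y² + ε x² = 0` are
invariant, with `ẋ = (1 + x) K₁`, `ẏ = (1 + y) K₂` and `Ḟ = (2c K₁ + 2a K₂) F`. Hence the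
logarithmic derivative of `H = (1 + x)^(-2c) (1 + y)^(-2a) F` along the flow is
`-2c K₁ - 2a K₂ + (2c K₁ + 2a K₂) = 0`.
-/

open Real

theorem hasDerivAt_const_add_rpow {r x : ℝ} (hx : 0 < r + x) (α : ℝ) :
    HasDerivAt (fun x => (r + x) ^ α) (α * (r + x) ^ α / (r + x)) x := by
  refine (((hasDerivAt_id x).const_add r).rpow_const (Or.inl hx.ne')).congr_deriv ?_
  rw [id, rpow_sub_one hx.ne', one_mul, mul_div_assoc]

theorem darboux_first_integral {F : ℝ → ℝ → ℝ} {r s α β x y P Q K₁ K₂ Fx Fy : ℝ}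
    (hx : 0 < r + x) (hy : 0 < s + y)
    (hFx : HasDerivAt (fun x => F x y) Fx x) (hFy : HasDerivAt (F x) Fy y)
    (hP : P = (r + x) * K₁) (hQ : Q = (s + y) * K₂)
    (hF : P * Fx + Q * Fy = -(α * K₁ + β * K₂) * F x y) :
    P * deriv (fun x => (r + x) ^ α * (s + y) ^ β * F x y) x +
      Q * deriv (fun y => (r + x) ^ α * (s + y) ^ β * F x y) y = 0 := by
  have hHx : HasDerivAt (fun x => (r + x) ^ α * (s + y) ^ β * F x y) _ x :=
    ((hasDerivAt_const_add_rpow hx α).mul_const ((s + y) ^ β)).mul hFx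
  have hHy : HasDerivAt (fun y => (r + x) ^ α * (s + y) ^ β * F x y) _ y :=
    ((hasDerivAt_const_add_rpow hy β).const_mul ((r + x) ^ α)).mul hFy
  subst hP hQ
  rw [hHx.deriv, hHy.deriv]
  field_simp
  linear_combination (r + x) ^ α * (s + y) ^ β * hF

theorem darboux_first_integral_perturbed (a c ε : ℝ) :
    ∀ x y : ℝ, x > -1 → y > -1 →
      (-ε*x*(a*x + a*x^2) + y + x*y + (1-a)*y^2 + (1-a)*x*y^2 - a*x^4 - a*x^5) *
        deriv (fun x : ℝ =>
          (1+x) ^ (-(2*c)) * (1+y) ^ (-(2*a)) * (x^4 + y^2 + ε*x^2)) x +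
      (-ε*x*(1 + (1-c)*x + y + (1-c)*x*y)
        + c*y^2 - 2*x^3 + c*y^3 - 2*x^3*y + (c-2)*x^4*(1+y)) *
        deriv (fun y : ℝ =>
          (1+x) ^ (-(2*c)) * (1+y) ^ (-(2*a)) * (x^4 + y^2 + ε*x^2)) y = 0 := by
  intro x y hx hy
  have hFx : HasDerivAt (fun x => x^4 + y^2 + ε*x^2) (4*x^3 + 2*ε*x) x := by
    refine (((hasDerivAt_pow 4 x).add_const (y^2)).add
      ((hasDerivAt_pow 2 x).const_mul ε)).congr_deriv ?_
    ring
  have hFy : HasDerivAt (fun y => x^4 + y^2 + ε*x^2) (2*y) y := by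
    refine (((hasDerivAt_pow 2 y).const_add (x^4)).add_const (ε*x^2)).congr_deriv ?_
    ring
  exact darboux_first_integral (F := fun x y => x^4 + y^2 + ε*x^2)
    (K₁ := -a*ε*x^2 + y + (1-a)*y^2 - a*x^4)
    (K₂ := -ε*x*(1 + (1-c)*x) + c*y^2 - 2*x^3 + (c-2)*x^4)
    (by linarith) (by linarith) hFx hFy (by ring) (by ring) (by ring)
end

section
/- The function H(x,y,ε) = exp(2·arg(ε + x² + i(x² + 2y − ε)))·(ε² + x⁴ − 2εy + 2x²y + 2y²), where arg denotes the argument of a complex number, is a first integral of the system ẋ = y + x², ẏ = −εx − x³ on the open set where ε + x² + i(x² + 2y − ε) ≠ 0, for every ε > 0. -/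
/-!
Write `a = ε + x²`, `b = x² + 2y − ε`. Then `a² + b² = 2(ε² + x⁴ − 2εy + 2x²y + 2y²)`, so on `a > 0`
the function is `½ e^{2θ} r²` in polar coordinates `a + ib = r e^{iθ}`, with `θ = arctan (b / a)`.
Its derivative along any curve is `e^{2θ} (a a' + b b' + a b' − b a')`, and along the vector field
`(y + x², −εx − x³)` this is `e^{2θ}` times `4x a (y + x²) − 2(εx + x³)(a + b) = 0`.
-/

open Real

lemma Complex.arg_ofReal_add_I_mul_ofReal {a : ℝ} (b : ℝ) (ha : 0 < a) :
    Complex.arg (a + Complex.I * b) = Real.arctan (b / a) := by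
  have hre : 0 < (a + Complex.I * b : ℂ).re := by simpa using ha
  obtain ⟨hlo, hhi⟩ := abs_lt.1 (Complex.abs_arg_lt_pi_div_two_iff.2 (Or.inl hre))
  rw [← Real.arctan_tan hlo hhi, Complex.tan_arg]
  simp

lemma HasDerivAt.exp_two_mul_arctan_div_mul_sq_add_sq {f g : ℝ → ℝ} {f' g' t : ℝ}
    (hf : HasDerivAt f f' t) (hg : HasDerivAt g g' t) (hft : f t ≠ 0) :
    HasDerivAt (fun s => Real.exp (2 * Real.arctan (g s / f s)) * (f s ^ 2 + g s ^ 2))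
      (2 * Real.exp (2 * Real.arctan (g t / f t)) * (f t * f' + g t * g' + (f t * g' - g t * f'))) t := by
  have hθ := (((hg.fun_div hf hft).arctan).const_mul 2).exp
  refine (hθ.mul ((hf.fun_pow 2).fun_add (hg.fun_pow 2))).congr_deriv ?_
  have hsq : f t ^ 2 + g t ^ 2 ≠ 0 := by positivity
  field_simp
  ring

lemma first_integral_eq_polar (ε x y : ℝ) (hε : 0 < ε) :
    exp (2 * Complex.arg (((ε + x^2 : ℝ) : ℂ) + Complex.I * ((x^2 + 2*y - ε : ℝ) : ℂ))) *
        (ε^2 + x^4 - 2*ε*y + 2*x^2*y + 2*y^2) =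
      exp (2 * arctan ((x^2 + 2*y - ε) / (ε + x^2))) *
        ((ε + x^2) ^ 2 + (x^2 + 2*y - ε) ^ 2) / 2 := by
  rw [Complex.arg_ofReal_add_I_mul_ofReal _ (by positivity)]
  ring

theorem nonanalytic_first_integral (ε : ℝ) (hε : ε > 0) :
    ∀ x y : ℝ,
      ((ε + x^2 : ℝ) : ℂ) + Complex.I * ((x^2 + 2*y - ε : ℝ) : ℂ) ≠ 0 →
      (y + x^2) *
        deriv (fun x : ℝ =>
          Real.exp (2 * Complex.arg (((ε + x^2 : ℝ) : ℂ)
            + Complex.I * ((x^2 + 2*y - ε : ℝ) : ℂ))) *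
          (ε^2 + x^4 - 2*ε*y + 2*x^2*y + 2*y^2)) x +
      (-ε*x - x^3) *
        deriv (fun y : ℝ =>
          Real.exp (2 * Complex.arg (((ε + x^2 : ℝ) : ℂ)
            + Complex.I * ((x^2 + 2*y - ε : ℝ) : ℂ))) *
          (ε^2 + x^4 - 2*ε*y + 2*x^2*y + 2*y^2)) y = 0 := by
  intro x y _
  simp_rw [first_integral_eq_polar ε _ _ hε]
  have ha : ε + x ^ 2 ≠ 0 := by positivity
  have hx := (HasDerivAt.exp_two_mul_arctan_div_mul_sq_add_sq ((hasDerivAt_pow 2 x).const_add ε)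
    (((hasDerivAt_pow 2 x).add_const (2 * y)).sub_const ε) ha).div_const 2
  have hy := (HasDerivAt.exp_two_mul_arctan_div_mul_sq_add_sq (hasDerivAt_const y (ε + x ^ 2))
    ((((hasDerivAt_id' y).const_mul 2).const_add (x ^ 2)).sub_const ε) ha).div_const 2
  rw [hx.deriv, hy.deriv]
  norm_num
  ring
end

section
/- The function H(x,y) = (1+x)^(−1)·(1+y)^(−1)·(x⁴ + y⁴) is a first integral, on {x > −1, y > −1}, of the system ẋ = −a(1+x)(x⁴ − 4y³ − 3y⁴), ẏ = −a(1+y)(4x³ + 3x⁴ − y⁴), for every real a. -/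
/-!
With `H = (x⁴ + y⁴) / ((1 + x)(1 + y))` one computes
`∂H/∂x = (3x⁴ + 4x³ - y⁴) / ((1 + x)²(1 + y))` and symmetrically for `∂H/∂y`, so the vector field
is `a (1 + x)² (1 + y)² (∂H/∂y, -∂H/∂x)`: a Hamiltonian field times a scalar factor, along which
`H` is constant.
-/

lemma deriv_quartic_div_one_add (c t : ℝ) (ht : 1 + t ≠ 0) :
    deriv (fun s : ℝ => (s ^ 4 + c) / (1 + s)) t = (3 * t ^ 4 + 4 * t ^ 3 - c) / (1 + t) ^ 2 := by
  have hnum : HasDerivAt (fun s : ℝ => s ^ 4 + c) (4 * t ^ 3) t := by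
    simpa using (hasDerivAt_pow 4 t).add_const c
  have hden : HasDerivAt (fun s : ℝ => 1 + s) 1 t := by
    simpa using (hasDerivAt_id t).const_add 1
  rw [(hnum.fun_div hden ht).deriv]
  ring

lemma deriv_first_integral_left (x y : ℝ) (hx : 1 + x ≠ 0) :
    deriv (fun x : ℝ => (1 + x) ^ (-1 : ℝ) * (1 + y) ^ (-1 : ℝ) * (x ^ 4 + y ^ 4)) x
      = (3 * x ^ 4 + 4 * x ^ 3 - y ^ 4) / ((1 + x) ^ 2 * (1 + y)) := by
  have hH : (fun x : ℝ => (1 + x) ^ (-1 : ℝ) * (1 + y) ^ (-1 : ℝ) * (x ^ 4 + y ^ 4))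
      = fun x => (1 + y)⁻¹ * ((x ^ 4 + y ^ 4) / (1 + x)) := by
    funext x
    rw [Real.rpow_neg_one, Real.rpow_neg_one]
    ring
  rw [hH, deriv_const_mul_field, deriv_quartic_div_one_add _ _ hx,
    div_eq_mul_inv, div_eq_mul_inv, mul_inv]
  ring

lemma deriv_first_integral_right (x y : ℝ) (hy : 1 + y ≠ 0) :
    deriv (fun y : ℝ => (1 + x) ^ (-1 : ℝ) * (1 + y) ^ (-1 : ℝ) * (x ^ 4 + y ^ 4)) y
      = (3 * y ^ 4 + 4 * y ^ 3 - x ^ 4) / ((1 + y) ^ 2 * (1 + x)) := by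
  have hswap : (fun y : ℝ => (1 + x) ^ (-1 : ℝ) * (1 + y) ^ (-1 : ℝ) * (x ^ 4 + y ^ 4))
      = fun y => (1 + y) ^ (-1 : ℝ) * (1 + x) ^ (-1 : ℝ) * (y ^ 4 + x ^ 4) := by
    funext y
    ring
  rw [hswap, deriv_first_integral_left y x hy]

theorem degenerate_center_first_integral (a : ℝ) :
    ∀ x y : ℝ, x > -1 → y > -1 →
      (-a*(1+x)*(x^4 - 4*y^3 - 3*y^4)) *
        deriv (fun x : ℝ => (1+x) ^ (-1 : ℝ) * (1+y) ^ (-1 : ℝ) * (x^4 + y^4)) x +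
      (-a*(1+y)*(4*x^3 + 3*x^4 - y^4)) *
        deriv (fun y : ℝ => (1+x) ^ (-1 : ℝ) * (1+y) ^ (-1 : ℝ) * (x^4 + y^4)) y = 0 := by
  intro x y hx hy
  have hx' : 1 + x ≠ 0 := by linarith
  have hy' : 1 + y ≠ 0 := by linarith
  rw [deriv_first_integral_left x y hx', deriv_first_integral_right x y hy']
  field_simp
  ring
end
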